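/- Let X be a nontrivial real Banach space and δ > 0. Then X is weakly δ-average rough if and only if the following holds: whenever n ∈ ℕ, x₁,…,xₙ are in the unit sphere S_X, x* is in the unit sphere S_{X*} of the dual, and ε > 0, there exist x*₁, x*₂ in the closed unit ball B_{X*} and y in the closed unit ball B_X such that |x*ⱼ(xᵢ) − x*(xᵢ)| < ε for all i ∈ {1,…,n} and j ∈ {1,2}, and x*₁(y) − x*₂(y) > δ − ε. -/

import Mathlib

open scoped BigOperators

/-- A Banach space `Z` is `δ`-average rough. -/
def IsAverageRough (Z : Type*) [NormedAddCommGroup Z] (δ : ℝ) : Prop :=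
  ∀ n : ℕ, 0 < n → ∀ x : Fin n → Z, (∀ i, ‖x i‖ = 1) →
    ∀ ε > (0 : ℝ), ∀ η > (0 : ℝ), ∃ y : Z, 0 < ‖y‖ ∧ ‖y‖ < η ∧
      (δ - ε) * ‖y‖ ≤ (1 / (n : ℝ)) * ∑ i, (‖x i + y‖ + ‖x i - y‖) - 2

/-- A Banach space `Z` is `δ`-rough. -/
def IsRough (Z : Type*) [NormedAddCommGroup Z] (δ : ℝ) : Prop :=
  ∀ x : Z, ‖x‖ = 1 →
    ∀ ε > (0 : ℝ), ∀ η > (0 : ℝ), ∃ y : Z, 0 < ‖y‖ ∧ ‖y‖ < η ∧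
      (δ - ε) * ‖y‖ ≤ ‖x + y‖ + ‖x - y‖ - 2

/-- A Banach space `Z` is non-rough if it is `ε`-rough for no `ε > 0`. -/
def NonRough (Z : Type*) [NormedAddCommGroup Z] : Prop :=
  ¬ ∃ ε > (0 : ℝ), IsRough Z ε

/-- A Banach space `Z` is octahedral. -/
def Octahedral (Z : Type*) [NormedAddCommGroup Z] : Prop :=
  ∀ (n : ℕ) (x : Fin n → Z), (∀ i, ‖x i‖ = 1) →
    ∀ ε > (0 : ℝ), ∃ y : Z, ‖y‖ = 1 ∧ ∀ i, 2 - ε ≤ ‖x i + y‖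

/-- A Banach space `Z` is alternatively octahedral. -/
def AlternativelyOctahedral (Z : Type*) [NormedAddCommGroup Z] : Prop :=
  ∀ (n : ℕ) (x : Fin n → Z), (∀ i, ‖x i‖ = 1) →
    ∀ ε > (0 : ℝ), ∃ y : Z, ‖y‖ = 1 ∧ ∀ i, 2 - ε ≤ max ‖x i + y‖ ‖x i - y‖

/-- A Banach space `X` is weakly `δ`-average rough: every non-empty relatively weak*
open subset of the closed unit ball of the dual has diameter at least `δ`. -/
def WeaklyAverageRough (X : Type*) [NormedAddCommGroup X] [NormedSpace ℝ X] (δ : ℝ) : Prop :=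
  ∀ V : Set (WeakDual ℝ X), IsOpen V →
    ∀ U : Set (StrongDual ℝ X),
      U = {f : StrongDual ℝ X | ‖f‖ ≤ 1} ∩
            {f : StrongDual ℝ X | StrongDual.toWeakDual f ∈ V} →
      U.Nonempty → δ ≤ Metric.diam U


/-!
If `X` is weakly `δ`-average rough, the functionals of `B_{X*}` that are `ε`-close to `f` at
`x₁, …, xₙ` form a relatively weak* open set, hence one of diameter `≥ δ`, and the norm of the
difference of two of its points is almost attained at some `y ∈ B_X`.

Conversely, a relatively weak* open set containing `g` contains a basic neighbourhood of `g` given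
by finitely many unit vectors, spanning a subspace `Y`. When `Y ≠ X`, a Hahn–Banach extension of
`g|Y`, corrected by a functional vanishing on `Y`, is a norm-one `f` agreeing with `g` on `Y`; the
pairs approximating `f` then lie in the neighbourhood. `Y = X` is impossible: in finite dimension a
finite `1/2`-net of the unit sphere controls the norm of every functional, which is incompatible
with the approximation property for `δ > 0`.
-/

open Metric Topology

def WeaklyAverageRoughApprox (X : Type*) [NormedAddCommGroup X] [NormedSpace ℝ X] (δ : ℝ) :
    Prop :=
  ∀ n : ℕ, 0 < n → ∀ x : Fin n → X, (∀ i, ‖x i‖ = 1) →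
    ∀ f : StrongDual ℝ X, ‖f‖ = 1 →
      ∀ ε > (0 : ℝ), ∃ f₁ f₂ : StrongDual ℝ X,
        ‖f₁‖ ≤ 1 ∧ ‖f₂‖ ≤ 1 ∧ ∃ y : X, ‖y‖ ≤ 1 ∧
          (∀ i, |f₁ (x i) - f (x i)| < ε ∧ |f₂ (x i) - f (x i)| < ε) ∧
          δ - ε < f₁ y - f₂ y

theorem Metric.exists_lt_dist_of_lt_diam {α : Type*} [PseudoMetricSpace α] {s : Set α}
    (hs : s.Nonempty) {c : ℝ} (hc : c < diam s) : ∃ a ∈ s, ∃ b ∈ s, c < dist a b := by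
  by_contra! H
  exact (diam_le_of_forall_dist_le_of_nonempty hs H).not_gt hc

section NormedSpace

variable {X : Type*} [NormedAddCommGroup X] [NormedSpace ℝ X]

theorem exists_norm_le_one_lt_apply_iff (φ : StrongDual ℝ X) (c : ℝ) :
    (∃ y : X, ‖y‖ ≤ 1 ∧ c < φ y) ↔ c < ‖φ‖ := by
  constructor
  · rintro ⟨y, hy, hc⟩
    calc c < φ y := hc
      _ ≤ ‖φ y‖ := Real.le_norm_self _
      _ ≤ ‖φ‖ * ‖y‖ := φ.le_opNorm y
      _ ≤ ‖φ‖ := mul_le_of_le_one_right (norm_nonneg _) hy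
  · intro hc
    obtain ⟨y, hy, hcy⟩ := φ.exists_lt_apply_of_lt_opNorm hc
    rcases le_or_gt 0 (φ y) with hpos | hneg
    · exact ⟨y, hy.le, by rwa [Real.norm_of_nonneg hpos] at hcy⟩
    · refine ⟨-y, by simpa using hy.le, ?_⟩
      rwa [map_neg, ← Real.norm_of_nonpos hneg.le]

theorem exists_norm_eq_one_smul_eq [Nontrivial X] (a : X) : ∃ u : X, ‖u‖ = 1 ∧ ‖a‖ • u = a := by
  rcases eq_or_ne a 0 with rfl | ha
  · obtain ⟨u, hu⟩ := exists_norm_eq X zero_le_one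
    exact ⟨u, hu, by simp⟩
  · exact ⟨‖a‖⁻¹ • a, norm_smul_inv_norm ha, smul_inv_smul₀ (norm_ne_zero_iff.2 ha) a⟩

theorem exists_norm_add_smul_eq_one {a b : X} (ha : ‖a‖ ≤ 1) (hb : b ≠ 0) :
    ∃ t : ℝ, ‖a + t • b‖ = 1 := by
  have hb' : 0 < ‖b‖ := norm_pos_iff.2 hb
  set T : ℝ := 2 / ‖b‖
  have hT : ‖T • b‖ = 2 := by
    rw [norm_smul, Real.norm_of_nonneg (by positivity), div_mul_cancel₀ _ hb'.ne']
  have hlarge : 1 ≤ ‖a + T • b‖ := by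
    have := norm_sub_le (a + T • b) a
    rw [add_sub_cancel_left, hT] at this
    linarith
  obtain ⟨t, -, ht⟩ := intermediate_value_Icc (by positivity : (0 : ℝ) ≤ T)
    (by fun_prop : Continuous fun t : ℝ => ‖a + t • b‖).continuousOn
    (⟨by simpa using ha, hlarge⟩ : (1 : ℝ) ∈ Set.Icc ‖a + (0 : ℝ) • b‖ ‖a + T • b‖)
  exact ⟨t, ht⟩

theorem exists_norm_eq_one_eqOn_of_ne_top {Y : Submodule ℝ X} (hY : IsClosed (Y : Set X))
    (hYtop : Y ≠ ⊤) {g : StrongDual ℝ X} (hg : ‖g‖ ≤ 1) :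
    ∃ f : StrongDual ℝ X, ‖f‖ = 1 ∧ ∀ y ∈ Y, f y = g y := by
  obtain ⟨g₀, hg₀, hg₀norm⟩ := exists_extension_norm_eq Y (g.comp Y.subtypeL)
  have hg₀le : ‖g₀‖ ≤ 1 := by
    rw [hg₀norm]
    exact (g.opNorm_comp_le _).trans (mul_le_one₀ hg (norm_nonneg _) (Y.norm_subtypeL_le))
  obtain ⟨z, hz⟩ : ∃ z, z ∉ Y := SetLike.exists_not_mem_of_ne_top Y hYtop
  have := hY
  obtain ⟨ψ, hψ⟩ := SeparatingDual.exists_ne_zero (R := ℝ) (x := Y.mkQ z)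
    (by rwa [ne_eq, Submodule.mkQ_apply, Submodule.Quotient.mk_eq_zero])
  set φ : StrongDual ℝ X := ψ.comp Y.mkQL
  have hφ : φ ≠ 0 := fun h => hψ (by simpa [φ] using congrArg (· z) h)
  obtain ⟨t, ht⟩ := exists_norm_add_smul_eq_one hg₀le hφ
  refine ⟨g₀ + t • φ, ht, fun y hy => ?_⟩
  simpa [φ, (Submodule.Quotient.mk_eq_zero Y).2 hy] using hg₀ ⟨y, hy⟩

theorem exists_finite_norming_set [FiniteDimensional ℝ X] [Nontrivial X] :
    ∃ s : Set X, s.Finite ∧ s.Nonempty ∧ (∀ a ∈ s, ‖a‖ = 1) ∧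
      ∀ (φ : StrongDual ℝ X) (η : ℝ), (∀ a ∈ s, |φ a| ≤ η) → ‖φ‖ ≤ 2 * η := by
  obtain ⟨s, hs_sphere, hs, hcover⟩ :=
    finite_approx_of_totallyBounded (isCompact_sphere (0 : X) 1).totallyBounded (1 / 2)
      (by norm_num)
  have hs1 : ∀ a ∈ s, ‖a‖ = 1 := fun a ha => mem_sphere_zero_iff_norm.1 (hs_sphere ha)
  obtain ⟨z₀, hz₀⟩ := (NormedSpace.sphere_nonempty (x := (0 : X))).2 zero_le_one
  obtain ⟨c₀, hc₀, -⟩ := Set.mem_iUnion₂.1 (hcover hz₀)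
  refine ⟨s, hs, ⟨c₀, hc₀⟩, hs1, fun φ η hφ => ?_⟩
  have hη : 0 ≤ η := (abs_nonneg _).trans (hφ c₀ hc₀)
  suffices ‖φ‖ ≤ η + ‖φ‖ / 2 by linarith
  refine φ.opNorm_le_of_unit_norm (by positivity) fun z hz => ?_
  obtain ⟨c, hc, hzc⟩ := Set.mem_iUnion₂.1 (hcover (mem_sphere_zero_iff_norm.2 hz))
  calc ‖φ z‖ = ‖φ c + φ (z - c)‖ := by rw [map_sub, add_sub_cancel]
    _ ≤ |φ c| + ‖φ‖ * ‖z - c‖ := norm_add_le_of_le (le_of_eq rfl) (φ.le_opNorm _)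
    _ ≤ η + ‖φ‖ * (1 / 2) := by
      gcongr
      · exact hφ c hc
      · exact (mem_ball_iff_norm.1 hzc).le
    _ = η + ‖φ‖ / 2 := by ring

open StrongDual in
theorem WeakDual.exists_finset_of_mem_nhds {V : Set (WeakDual ℝ X)} {g : StrongDual ℝ X}
    (hV : V ∈ 𝓝 (toWeakDual g)) :
    ∃ I : Finset X, ∃ r > 0, ∀ h : StrongDual ℝ X,
      (∀ a ∈ I, |h a - g a| < r) → toWeakDual h ∈ V := by
  obtain ⟨I, r, hr, hball⟩ := ((WeakDual.withSeminorms ℝ X).mem_nhds_iff _ V).1 hV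
  exact ⟨I, r, hr, fun h hh => hball <| (Seminorm.mem_ball _).2 <|
    Seminorm.finset_sup_apply_lt hr fun a ha => hh a ha⟩

open StrongDual in
theorem WeakDual.exists_unit_vectors_of_mem_nhds [Nontrivial X] {V : Set (WeakDual ℝ X)}
    {g : StrongDual ℝ X} (hV : V ∈ 𝓝 (toWeakDual g)) :
    ∃ s : Set X, s.Finite ∧ s.Nonempty ∧ (∀ a ∈ s, ‖a‖ = 1) ∧ ∃ r > 0, ∀ h : StrongDual ℝ X,
      (∀ a ∈ s, |h a - g a| < r) → toWeakDual h ∈ V := by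
  obtain ⟨I, r, hr, hI⟩ := exists_finset_of_mem_nhds hV
  choose u hu1 hu using exists_norm_eq_one_smul_eq (X := X)
  set M := 1 + ∑ a ∈ I, ‖a‖
  refine ⟨u '' insert 0 (I : Set X), (I.finite_toSet.insert 0).image u, by simp,
    Set.forall_mem_image.2 fun a _ => hu1 a, r / M, by positivity,
    fun h hh => hI h fun a ha => ?_⟩
  have haM : ‖a‖ < M := by
    have := Finset.single_le_sum (fun b _ => norm_nonneg b) ha
    linarith
  calc |h a - g a| = ‖a‖ * |h (u a) - g (u a)| := by
        conv_lhs => rw [← hu a]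
        rw [map_smul, map_smul, smul_eq_mul, smul_eq_mul, ← mul_sub, abs_mul, abs_norm]
    _ ≤ ‖a‖ * (r / M) := by
        gcongr
        exact (hh (u a) ⟨a, by simp [ha], rfl⟩).le
    _ < M * (r / M) := by gcongr
    _ = r := mul_div_cancel₀ r (by positivity)

end NormedSpace

namespace WeaklyAverageRoughApprox

variable {X : Type*} [NormedAddCommGroup X] [NormedSpace ℝ X] {δ : ℝ}

theorem exists_of_finite (h : WeaklyAverageRoughApprox X δ) {s : Set X} (hs : s.Finite)
    (hne : s.Nonempty) (hs1 : ∀ a ∈ s, ‖a‖ = 1) {f : StrongDual ℝ X} (hf : ‖f‖ = 1) {ε : ℝ}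
    (hε : 0 < ε) :
    ∃ f₁ f₂ : StrongDual ℝ X, ‖f₁‖ ≤ 1 ∧ ‖f₂‖ ≤ 1 ∧
      (∀ a ∈ s, |f₁ a - f a| < ε ∧ |f₂ a - f a| < ε) ∧ δ - ε < ‖f₁ - f₂‖ := by
  obtain ⟨n, x, -, rfl⟩ := hs.fin_param
  obtain ⟨-, i, rfl⟩ := hne
  obtain ⟨f₁, f₂, h₁, h₂, y, hy, hclose, hgap⟩ :=
    h n i.pos x (fun j => hs1 _ ⟨j, rfl⟩) f hf ε hε
  exact ⟨f₁, f₂, h₁, h₂, Set.forall_mem_range.2 hclose,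
    (exists_norm_le_one_lt_apply_iff _ _).1 ⟨y, hy, hgap⟩⟩

theorem not_finiteDimensional [Nontrivial X] (hδ : 0 < δ) (h : WeaklyAverageRoughApprox X δ) :
    ¬ FiniteDimensional ℝ X := by
  intro _
  obtain ⟨s, hs, hne, hs1, hnorming⟩ := exists_finite_norming_set (X := X)
  obtain ⟨f, hf, -⟩ := exists_dual_vector' ℝ (0 : X)
  obtain ⟨f₁, f₂, -, -, hclose, hgap⟩ := h.exists_of_finite hs hne hs1 hf (ε := δ / 8)
    (by positivity)
  have hsmall : ‖f₁ - f₂‖ ≤ 2 * (δ / 4) := hnorming _ _ fun a ha => by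
    obtain ⟨h₁, h₂⟩ := hclose a ha
    rw [show (f₁ - f₂) a = f₁ a - f₂ a from rfl, abs_le]
    constructor <;> linarith [abs_lt.1 h₁, abs_lt.1 h₂]
  linarith

open StrongDual in
theorem weaklyAverageRough [Nontrivial X] (hδ : 0 < δ) (h : WeaklyAverageRoughApprox X δ) :
    WeaklyAverageRough X δ := by
  rintro V hV U rfl ⟨g, hg, hgV⟩
  obtain ⟨s, hs, hne, hs1, r, hr, hsV⟩ :=
    WeakDual.exists_unit_vectors_of_mem_nhds (hV.mem_nhds hgV)
  have := FiniteDimensional.span_of_finite ℝ hs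
  have hspan : Submodule.span ℝ s ≠ ⊤ := fun htop =>
    h.not_finiteDimensional hδ (Module.Finite.equiv (LinearEquiv.ofTop _ htop))
  obtain ⟨f, hf, hfg⟩ :=
    exists_norm_eq_one_eqOn_of_ne_top (Submodule.closed_of_finiteDimensional _) hspan hg
  have hU : Bornology.IsBounded {f' : StrongDual ℝ X | ‖f'‖ ≤ 1 ∧ toWeakDual f' ∈ V} :=
    isBounded_closedBall.subset fun f' hf' => mem_closedBall_zero_iff.2 hf'.1
  refine le_of_forall_sub_le fun ε hε => ?_
  obtain ⟨f₁, f₂, h₁, h₂, hclose, hgap⟩ := h.exists_of_finite hs hne hs1 hf (lt_min hε hr)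
  have hmem : ∀ f' : StrongDual ℝ X, ‖f'‖ ≤ 1 → (∀ a ∈ s, |f' a - f a| < min ε r) →
      ‖f'‖ ≤ 1 ∧ toWeakDual f' ∈ V := fun f' hf' hclose' =>
    ⟨hf', hsV f' fun a ha => hfg a (Submodule.subset_span ha) ▸
      (hclose' a ha).trans_le (min_le_right _ _)⟩
  calc δ - ε ≤ δ - min ε r := by gcongr; exact min_le_left _ _
    _ ≤ ‖f₁ - f₂‖ := hgap.le
    _ = dist f₁ f₂ := (dist_eq_norm _ _).symm
    _ ≤ diam _ := dist_le_diam_of_mem hU (hmem f₁ h₁ fun a ha => (hclose a ha).1)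
        (hmem f₂ h₂ fun a ha => (hclose a ha).2)

end WeaklyAverageRoughApprox

theorem WeaklyAverageRough.approx {X : Type*} [NormedAddCommGroup X] [NormedSpace ℝ X] {δ : ℝ}
    (h : WeaklyAverageRough X δ) : WeaklyAverageRoughApprox X δ := by
  intro n _ x _ f hf ε hε
  set V : Set (WeakDual ℝ X) := ⋂ i, {v | |v (x i) - f (x i)| < ε}
  have hV : IsOpen V := isOpen_iInter_of_finite fun i =>
    isOpen_lt ((WeakDual.eval_continuous (x i)).sub continuous_const).abs continuous_const
  set U := {g : StrongDual ℝ X | ‖g‖ ≤ 1} ∩ {g | StrongDual.toWeakDual g ∈ V}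
  have hclose : ∀ g ∈ U, ∀ i, |g (x i) - f (x i)| < ε := fun g hg => by
    simpa [U, V] using hg.2
  have hfU : f ∈ U := ⟨hf.le, by simp [V, hε]⟩
  obtain ⟨f₁, hf₁, f₂, hf₂, hd⟩ :=
    exists_lt_dist_of_lt_diam ⟨f, hfU⟩ ((sub_lt_self δ hε).trans_le (h V hV U rfl ⟨f, hfU⟩))
  obtain ⟨y, hy, hgap⟩ := (exists_norm_le_one_lt_apply_iff _ _).2 (dist_eq_norm f₁ f₂ ▸ hd)
  exact ⟨f₁, f₂, hf₁.1, hf₂.1, y, hy, fun i => ⟨hclose f₁ hf₁ i, hclose f₂ hf₂ i⟩, hgap⟩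

theorem weaklyAverageRough_iff_approx_general
    (X : Type*) [NormedAddCommGroup X] [NormedSpace ℝ X] [Nontrivial X]
    (δ : ℝ) (hδ : 0 < δ) :
    WeaklyAverageRough X δ ↔
      ∀ n : ℕ, 0 < n → ∀ x : Fin n → X, (∀ i, ‖x i‖ = 1) →
        ∀ f : StrongDual ℝ X, ‖f‖ = 1 →
          ∀ ε > (0 : ℝ), ∃ f₁ f₂ : StrongDual ℝ X,
            ‖f₁‖ ≤ 1 ∧ ‖f₂‖ ≤ 1 ∧ ∃ y : X, ‖y‖ ≤ 1 ∧
              (∀ i, |f₁ (x i) - f (x i)| < ε ∧ |f₂ (x i) - f (x i)| < ε) ∧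
              δ - ε < f₁ y - f₂ y :=
  ⟨WeaklyAverageRough.approx, WeaklyAverageRoughApprox.weaklyAverageRough hδ⟩

theorem weaklyAverageRough_iff_approx
    (X : Type*) [NormedAddCommGroup X] [NormedSpace ℝ X] [CompleteSpace X] [Nontrivial X]
    (δ : ℝ) (hδ : 0 < δ) :
    WeaklyAverageRough X δ ↔
      ∀ n : ℕ, 0 < n → ∀ x : Fin n → X, (∀ i, ‖x i‖ = 1) →
        ∀ f : StrongDual ℝ X, ‖f‖ = 1 →
          ∀ ε > (0 : ℝ), ∃ f₁ f₂ : StrongDual ℝ X,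
            ‖f₁‖ ≤ 1 ∧ ‖f₂‖ ≤ 1 ∧ ∃ y : X, ‖y‖ ≤ 1 ∧
              (∀ i, |f₁ (x i) - f (x i)| < ε ∧ |f₂ (x i) - f (x i)| < ε) ∧
              δ - ε < f₁ y - f₂ y :=
  weaklyAverageRough_iff_approx_general X δ hδ
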